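/- arXiv:2401.06636 — 4 statements merged into one kernel-verified Lean document; each statement's English description precedes it below -/
import Mathlib

section
/- Let S be the semigroup B^2_{[0,∞)} with an adjoined compact ideal I (with embedding homomorphism f), and assume that I is not open in S. Then for every real number α ≥ 0 the sets f(L_α^+) ∪ I and f(L_α^−) ∪ I are compact subsets of S. -/
/-- The underlying set of the semigroup `B_{[0,∞)}`: pairs of non-negative reals. -/
abbrev Bsg := {p : ℝ × ℝ // 0 ≤ p.1 ∧ 0 ≤ p.2}

namespace Bsg

/-- The multiplication `(a,b)·(c,d) = (a+c−min b c, b+d−min b c)`. -/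
def bmul (u v : Bsg) : Bsg :=
  ⟨(u.1.1 + v.1.1 - min u.1.2 v.1.1, u.1.2 + v.1.2 - min u.1.2 v.1.1),
    by
      refine ⟨?_, ?_⟩
      · show (0:ℝ) ≤ u.1.1 + v.1.1 - min u.1.2 v.1.1
        have h := min_le_right u.1.2 v.1.1
        have h1 := u.2.1; have h2 := v.2.1; linarith
      · show (0:ℝ) ≤ u.1.2 + v.1.2 - min u.1.2 v.1.1
        have h := min_le_left u.1.2 v.1.1
        have h1 := u.2.2; have h2 := v.2.2; linarith⟩

instance : Semigroup Bsg where
  mul := bmul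
  mul_assoc := by
    rintro ⟨⟨a,b⟩,ha,hb⟩ ⟨⟨c,d⟩,hc,hd⟩ ⟨⟨e,g⟩,he,hg⟩
    show bmul (bmul _ _) _ = bmul _ (bmul _ _)
    apply Subtype.ext
    rw [Prod.ext_iff]
    constructor <;>
      simp only [bmul, min_def] <;> split_ifs <;> simp_all <;> linarith

/-- The natural partial order on the inverse semigroup `B_{[0,∞)}`:
`s ≼ t` iff `s = t·e` for some idempotent `e`. -/
def ple (s t : Bsg) : Prop := ∃ e : Bsg, e * e = e ∧ s = t * e

/-- `L_α^+ = {(x, x+α) : x ≥ 0}`. -/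
def Lplus (α : ℝ) : Set Bsg := {p | p.1.2 = p.1.1 + α}

/-- `L_α^− = {(x+α, x) : x ≥ 0}`. -/
def Lminus (α : ℝ) : Set Bsg := {p | p.1.1 = p.1.2 + α}

/-- `↓(a,b)`, the down-set of an element w.r.t. the natural partial order. -/
def lowerSet (t : Bsg) : Set Bsg := {s | ple s t}

/-- `↓°(a,b) = ↓(a,b) \ {(a,b)}`. -/
def lowerSetStrict (t : Bsg) : Set Bsg := lowerSet t \ {t}

/-- The inversion `(a,b) ↦ (b,a)`. -/
def binv (u : Bsg) : Bsg := ⟨(u.1.2, u.1.1), u.2.2, u.2.1⟩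

end Bsg

/-- The topology `τ_L`, induced by the injection `(a,b) ↦ (b−a, min(a,b))` into `ℝ_d × ℝ`,
where the first factor carries the discrete topology. -/
def tauL : TopologicalSpace Bsg :=
  TopologicalSpace.induced (fun p : Bsg => ((p.1.2 - p.1.1, min p.1.1 p.1.2) : ℝ × ℝ))
    (@instTopologicalSpaceProd ℝ ℝ ⊥ inferInstance)

/- `B^2_{[0,∞)}`: we equip `Bsg` with the topology `τ_L`. -/
instance (priority := 2000) : TopologicalSpace Bsg := tauL

/-!
The diagonal `L₀⁺ = {(t,t)}` is a decreasing chain of idempotents, `(s,s)·(t,t) = (t,t)` for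
`s ≤ t`, so every cluster point `z` of `t ↦ f(t,t)` at infinity satisfies `f(s,s)·z = z` for all
`s`; no `z = f w` does, hence all these cluster points lie in `I`. Since `I` is not open, an
ultrafilter `𝒰` on `B` converges under `f` to a point of `I`. Fix a compact neighbourhood `C` of
`I`. The rays `p·(t,t)` keep the line `b − a` of `p`; if one of them stays in `C`, or if `𝒰` lives
on one line (along which it must then escape to infinity, bounded parts of a line being compact),
right multiplication by the element sending that line onto the diagonal shows that `f(t,t)` returns to
a compact set `C·f(q)` for arbitrarily large `t`. Otherwise the rays leave `C` and their exit
points force `𝒰` onto one line after all, since lines are open. By connectedness the curve is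
then eventually in a compact neighbourhood of `I`, so the closed set `f(L₀⁺) ∪ I` is compact, and
`f(L_α^±) ∪ I` is its translate by `f(0,α)` resp. `f(α,0)`, together with `I`.
-/

open Filter Set Topology
open scoped NNReal

theorem IsPreconnected.inter_frontier_nonempty {X : Type*} [TopologicalSpace X] {s C : Set X}
    (hs : IsPreconnected s) (h₁ : (s ∩ C).Nonempty) (h₂ : (s \ C).Nonempty) :
    (s ∩ frontier C).Nonempty := by
  by_contra h
  have hsub : s ⊆ interior C ∪ (closure C)ᶜ := fun x hx => by
    by_cases hx' : x ∈ closure C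
    · exact Or.inl (not_not.1 fun hi => h ⟨x, hx, hx', hi⟩)
    · exact Or.inr hx'
  obtain ⟨x, -, hxi, hxc⟩ := hs _ _ isOpen_interior isClosed_closure.isOpen_compl hsub
    (h₁.mono fun x hx => ⟨hx.1, (hsub hx.1).resolve_right (not_not.2 (subset_closure hx.2))⟩)
    (h₂.mono fun x hx => ⟨hx.1, (hsub hx.1).resolve_left fun hi => hx.2 (interior_subset hi)⟩)
  exact hxc (interior_subset_closure hxi)

theorem IsCompact.frontier {X : Type*} [TopologicalSpace X] [T2Space X] {C : Set X}
    (hC : IsCompact C) : IsCompact (frontier C) :=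
  hC.of_isClosed_subset isClosed_frontier
    (frontier_subset_closure.trans hC.isClosed.closure_subset)

theorem exists_isCompact_eventually_mem_of_frequently {ι X : Type*}
    [ConditionallyCompleteLinearOrder ι] [DenselyOrdered ι] [TopologicalSpace ι]
    [OrderTopology ι] [TopologicalSpace X] [T2Space X] [WeaklyLocallyCompactSpace X] {γ : ι → X}
    (hγ : Continuous γ) {I K : Set X} (hI : IsCompact I) (hK : IsCompact K)
    (hcluster : ∀ z, MapClusterPt z atTop γ → z ∈ I) (hfreq : ∃ᶠ t in atTop, γ t ∈ K) :
    ∃ C, IsCompact C ∧ ∀ᶠ t in atTop, γ t ∈ C := by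
  have : Nonempty ι := let ⟨t, _⟩ := hfreq.exists; ⟨t⟩
  obtain ⟨C, hC, hKIC⟩ := exists_compact_superset (hK.union hI)
  refine ⟨C, hC, ?_⟩
  by_contra hout
  rw [not_eventually] at hout
  have hfront : ∃ᶠ t in atTop, γ t ∈ frontier C := by
    refine frequently_atTop.2 fun T => ?_
    obtain ⟨t₁, hTt₁, ht₁⟩ := frequently_atTop.1 hfreq T
    obtain ⟨t₂, ht₁₂, ht₂⟩ := frequently_atTop.1 hout t₁
    obtain ⟨_, ⟨t, ht, rfl⟩, hfr⟩ :=
      (isPreconnected_Icc.image γ hγ.continuousOn).inter_frontier_nonempty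
        ⟨γ t₁, mem_image_of_mem γ ⟨le_rfl, ht₁₂⟩, interior_subset (hKIC (Or.inl ht₁))⟩
        ⟨γ t₂, mem_image_of_mem γ ⟨ht₁₂, le_rfl⟩, ht₂⟩
    exact ⟨t, hTt₁.trans ht.1, hfr⟩
  obtain ⟨z, hz, hzγ⟩ := hC.frontier.exists_mapClusterPt_of_frequently hfront
  exact hz.2 (hKIC (Or.inr (hcluster z hzγ)))

theorem Ultrafilter.compl_mem_of_tendsto_of_notMem_range {X Y : Type*} [TopologicalSpace X]
    [TopologicalSpace Y] [T2Space Y] {f : X → Y} (hf : Continuous f) {𝒰 : Ultrafilter X}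
    {a : Y} (ha : Tendsto f 𝒰 (𝓝 a)) (hna : a ∉ range f) {K : Set X} (hK : IsCompact K) :
    Kᶜ ∈ 𝒰 := by
  refine Ultrafilter.compl_mem_iff_notMem.2 fun hK𝒰 => hna ?_
  obtain ⟨w, -, hw⟩ := hK.ultrafilter_le_nhds 𝒰 (le_principal_iff.2 hK𝒰)
  exact ⟨w, tendsto_nhds_unique ((hf.tendsto w).comp hw) ha⟩

theorem exists_ultrafilter_tendsto_of_not_isOpen {X Y : Type*} [TopologicalSpace Y]
    {f : X → Y} {I : Set Y} (hrange : range f = Iᶜ) (hI : ¬IsOpen I) :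
    ∃ a ∈ I, ∃ 𝒰 : Ultrafilter X, Tendsto f 𝒰 (𝓝 a) := by
  obtain ⟨a, haI, ha⟩ : ∃ a ∈ I, a ∈ closure Iᶜ := by
    by_contra! h
    exact hI (interior_eq_iff_isOpen.1 (interior_subset.antisymm fun a ha => by
      simpa [closure_compl] using h a ha))
  rw [← hrange] at ha
  obtain ⟨u, hu, hua⟩ := mem_closure_iff_ultrafilter.1 ha
  refine ⟨a, haI, Ultrafilter.ofComapInfPrincipal (m := f) (s := univ) (by rwa [image_univ]),
    ?_⟩
  rw [Tendsto, ← Ultrafilter.coe_map, Ultrafilter.ofComapInfPrincipal_eq_of_map]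
  exact hua

theorem IsCompact.image_union_of_mapsTo {X : Type*} [TopologicalSpace X] {A I : Set X}
    {g : X → X} (hA : IsCompact (A ∪ I)) (hI : IsCompact I) (hg : Continuous g)
    (hgI : MapsTo g I I) : IsCompact (g '' A ∪ I) := by
  rw [← union_eq_right.2 hgI.image_subset, ← union_assoc, ← image_union]
  exact (hA.image hg).union hI

namespace Bsg

def gap (p : Bsg) : ℝ := p.1.2 - p.1.1

def diag (t : ℝ≥0) : Bsg := ⟨(t, t), t.2, t.2⟩

noncomputable def lineToDiag (β : ℝ) : Bsg :=
  ⟨(max β 0, max (-β) 0), le_max_right _ _, le_max_right _ _⟩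

lemma ext_fst_snd {p q : Bsg} (h₁ : p.1.1 = q.1.1) (h₂ : p.1.2 = q.1.2) : p = q :=
  Subtype.ext (Prod.ext h₁ h₂)

lemma mul_fst (p q : Bsg) : (p * q).1.1 = p.1.1 + q.1.1 - min p.1.2 q.1.1 := rfl

lemma mul_snd (p q : Bsg) : (p * q).1.2 = p.1.2 + q.1.2 - min p.1.2 q.1.1 := rfl

lemma gap_mul_diag (p : Bsg) (t : ℝ≥0) : gap (p * diag t) = gap p := by
  simp only [gap, mul_fst, mul_snd, diag]; ring

lemma mul_diag_zero (p : Bsg) : p * diag 0 = p :=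
  ext_fst_snd (by simp [mul_fst, diag, p.2.2]) (by simp [mul_snd, diag, p.2.2])

lemma fst_diag_mul (s : ℝ≥0) (p : Bsg) : (diag s * p).1.1 = max (s : ℝ) p.1.1 := by
  rw [mul_fst]; simp only [diag]; linarith [min_add_max (s : ℝ) p.1.1]

lemma diag_mul_diag_of_le {s t : ℝ≥0} (h : s ≤ t) : diag s * diag t = diag t := by
  have h' : (s : ℝ) ≤ t := h
  exact ext_fst_snd (by rw [fst_diag_mul]; exact max_eq_right h')
    (by simp [mul_snd, diag, min_eq_left h'])

lemma le_fst_mul_diag (p : Bsg) (t : ℝ≥0) : (t : ℝ) ≤ (p * diag t).1.1 + p.1.2 := by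
  rw [mul_fst]; simp only [diag]; linarith [min_le_left p.1.2 t, p.2.1]

lemma Lplus_eq (α : ℝ) : Lplus α = {p | gap p = α} := by
  ext p
  change _ = _ + α ↔ _ - _ = α
  constructor <;> intro h <;> linarith

lemma Lplus_zero_eq_range_diag : Lplus 0 = range diag := by
  refine Subset.antisymm (fun p (hp : p.1.2 = p.1.1 + 0) => ⟨p.1.1.toNNReal, ?_⟩) ?_
  · exact ext_fst_snd (Real.coe_toNNReal _ p.2.1) (by simp [diag, hp, p.2.1])
  · rintro _ ⟨t, rfl⟩
    simp [Lplus, diag]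

lemma image_mul_const_Lplus_zero {α : ℝ} (hα : 0 ≤ α) :
    (· * ⟨(0, α), le_rfl, hα⟩) '' Lplus 0 = Lplus α := by
  rw [Lplus_zero_eq_range_diag, ← range_comp]
  refine Subset.antisymm ?_ fun p (hp : p.1.2 = p.1.1 + α) => ⟨p.1.1.toNNReal, ?_⟩
  · rintro _ ⟨t, rfl⟩
    simp [Lplus, diag, mul_fst, mul_snd]
  · refine ext_fst_snd ?_ ?_ <;> simp [diag, mul_fst, mul_snd, hp, p.2.1]

lemma image_const_mul_Lplus_zero {α : ℝ} (hα : 0 ≤ α) :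
    (⟨(α, 0), hα, le_rfl⟩ * ·) '' Lplus 0 = Lminus α := by
  rw [Lplus_zero_eq_range_diag, ← range_comp]
  refine Subset.antisymm ?_ fun p (hp : p.1.1 = p.1.2 + α) => ⟨p.1.2.toNNReal, ?_⟩
  · rintro _ ⟨t, rfl⟩
    simp [Lminus, diag, mul_fst, mul_snd, add_comm]
  · refine ext_fst_snd ?_ ?_ <;> simp [diag, mul_fst, mul_snd, hp, p.2.2, add_comm]

lemma mul_lineToDiag_gap (p : Bsg) : p * lineToDiag (gap p) = diag p.1.1.toNNReal := by
  obtain ⟨⟨a, b⟩, ha, hb⟩ := p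
  rcases le_total a b with h | h <;> refine ext_fst_snd ?_ ?_ <;>
    simp [mul_fst, mul_snd, lineToDiag, diag, gap, ha, hb, h]

def RealDiscrete : Type := ℝ

instance : TopologicalSpace RealDiscrete := ⊥

instance : DiscreteTopology RealDiscrete := ⟨rfl⟩

def coord (p : Bsg) : RealDiscrete × ℝ := (gap p, min p.1.1 p.1.2)

lemma isInducing_coord : IsInducing coord := ⟨rfl⟩

lemma isLocallyConstant_gap : IsLocallyConstant gap :=
  (IsLocallyConstant.of_discrete (X := RealDiscrete) id).comp_continuous
    (continuous_fst.comp isInducing_coord.continuous)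

lemma isClopen_setOf_gap_eq (c : ℝ) : IsClopen {p : Bsg | gap p = c} :=
  isLocallyConstant_gap.isClopen_fiber c

lemma continuous_diag : Continuous diag := by
  refine isInducing_coord.continuous_iff.2 ?_
  have : coord ∘ diag = fun t : ℝ≥0 => ((coord (diag 0)).1, (t : ℝ)) := by
    funext t; simp [coord, gap, diag]
  rw [this]
  exact continuous_const.prodMk NNReal.continuous_coe

lemma range_coord : range coord = {x : RealDiscrete × ℝ | 0 ≤ x.2} := by
  refine Subset.antisymm ?_ ?_
  · rintro _ ⟨p, rfl⟩
    exact le_min p.2.1 p.2.2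
  · rintro ⟨d, m⟩ (hm : 0 ≤ m)
    change ℝ at d
    refine ⟨⟨(m + max (-d) 0, m + max d 0), by positivity, by positivity⟩, Prod.ext ?_ ?_⟩
    · change m + max d 0 - (m + max (-d) 0) = d
      rcases le_total d 0 with h | h <;> simp [h]
    · change min (m + max (-d) 0) (m + max d 0) = m
      rcases le_total d 0 with h | h <;> simp [h]

lemma isCompact_setOf_gap_eq_min_le (β n : ℝ) :
    IsCompact {p : Bsg | gap p = β ∧ min p.1.1 p.1.2 ≤ n} := by
  have hset : {p : Bsg | gap p = β ∧ min p.1.1 p.1.2 ≤ n} =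
      coord ⁻¹' (({β} : Set RealDiscrete) ×ˢ Icc 0 n) := by
    ext p
    exact and_congr Iff.rfl ⟨fun h => ⟨le_min p.2.1 p.2.2, h⟩, And.right⟩
  rw [hset]
  exact isInducing_coord.isCompact_preimage'
    ((isCompact_singleton (X := RealDiscrete)).prod isCompact_Icc)
    (by rw [range_coord]; exact fun x hx => hx.2.1)

end Bsg

structure IsAdjoinedCompactIdeal {S : Type*} [TopologicalSpace S] [Semigroup S] (I : Set S)
    (f : Bsg → S) : Prop where
  isCompact : IsCompact I
  mul_mem : ∀ s : S, ∀ a ∈ I, s * a ∈ I ∧ a * s ∈ I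
  map_mul : ∀ u v : Bsg, f (u * v) = f u * f v
  range_eq : range f = Iᶜ
  isEmbedding : IsEmbedding f

namespace IsAdjoinedCompactIdeal

open Bsg

variable {S : Type*} [TopologicalSpace S] [Semigroup S] {I : Set S} {f : Bsg → S}

lemma notMem_range (hS : IsAdjoinedCompactIdeal I f) {a : S} (ha : a ∈ I) : a ∉ range f :=
  fun h => (hS.range_eq ▸ h) ha

lemma image_mul_const_image (hS : IsAdjoinedCompactIdeal I f) (L : Set Bsg) (q : Bsg) :
    (· * f q) '' (f '' L) = f '' ((· * q) '' L) := by
  simp only [image_image, hS.map_mul]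

lemma image_const_mul_image (hS : IsAdjoinedCompactIdeal I f) (L : Set Bsg) (q : Bsg) :
    (f q * ·) '' (f '' L) = f '' ((q * ·) '' L) := by
  simp only [image_image, hS.map_mul]

lemma isClosed_image_union [T2Space S] (hS : IsAdjoinedCompactIdeal I f) {L : Set Bsg}
    (hL : IsClosed L) : IsClosed (f '' L ∪ I) := by
  have hf : IsOpenEmbedding f :=
    ⟨hS.isEmbedding, hS.range_eq ▸ hS.isCompact.isClosed.isOpen_compl⟩
  have hcompl : (f '' L ∪ I)ᶜ = f '' Lᶜ := by
    rw [compl_union, image_compl_eq_range_sdiff_image hS.isEmbedding.injective, hS.range_eq,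
      sdiff_eq, inter_comm]
  rw [← isOpen_compl_iff, hcompl]
  exact hf.isOpenMap _ hL.isOpen_compl

lemma mem_of_mapClusterPt_diag [SeparatelyContinuousMul S] [T2Space S]
    (hS : IsAdjoinedCompactIdeal I f) {z : S} (hz : MapClusterPt z atTop (f ∘ diag)) :
    z ∈ I := by
  by_contra hzI
  obtain ⟨w, rfl⟩ : z ∈ range f := hS.range_eq ▸ hzI
  set s := (w.1.1 + 1).toNNReal
  have hfix : f (diag s) * f w = f w := by
    refine (isClosed_eq (continuous_const_mul _) continuous_id).closure_subset
      (hz.mem_closure_of_mem (s := {x | f (diag s) * x = x}) <|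
        (eventually_ge_atTop s).mono fun t ht => ?_)
    simp [← hS.map_mul, diag_mul_diag_of_le ht]
  have hw := congrArg (fun p : Bsg => p.1.1)
    (hS.isEmbedding.injective (by rw [hS.map_mul, hfix] : f (diag s * w) = f w))
  simp only [fst_diag_mul, s, Real.coe_toNNReal _ (by linarith [w.2.1] : 0 ≤ w.1.1 + 1)] at hw
  linarith [le_max_left (w.1.1 + 1) w.1.1]

lemma map_diag_mem_image_mul (hS : IsAdjoinedCompactIdeal I f) {C : Set S} {p : Bsg}
    (hp : f p ∈ C) : f (diag p.1.1.toNNReal) ∈ (· * f (lineToDiag (gap p))) '' C :=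
  ⟨f p, hp, by simp only [← hS.map_mul, mul_lineToDiag_gap]⟩

lemma frequently_diag_mem_of_ray_subset (hS : IsAdjoinedCompactIdeal I f) {C : Set S}
    {p : Bsg} (hp : ∀ y, f (p * diag y) ∈ C) :
    ∃ᶠ t in atTop, f (diag t) ∈ (· * f (lineToDiag (gap p))) '' C := by
  refine frequently_atTop.2 fun T => ?_
  have hq := hS.map_diag_mem_image_mul (hp (T + p.1.2.toNNReal))
  rw [gap_mul_diag] at hq
  refine ⟨_, (Real.le_toNNReal_iff_coe_le (p * _).2.1).2 ?_, hq⟩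
  have := le_fst_mul_diag p (T + p.1.2.toNNReal)
  push_cast [Real.coe_toNNReal _ p.2.2] at this
  linarith

lemma frequently_diag_mem_of_gap_mem [T2Space S] (hS : IsAdjoinedCompactIdeal I f)
    {𝒰 : Ultrafilter Bsg} {a : S} (ha : a ∈ I) (h𝒰 : Tendsto f 𝒰 (𝓝 a)) {C : Set S}
    (hC : f ⁻¹' C ∈ 𝒰) {β : ℝ} (hβ : {p | gap p = β} ∈ 𝒰) :
    ∃ᶠ t in atTop, f (diag t) ∈ (· * f (lineToDiag β)) '' C := by
  refine frequently_atTop.2 fun T => ?_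
  have hfar := Ultrafilter.compl_mem_of_tendsto_of_notMem_range hS.isEmbedding.continuous h𝒰
    (hS.notMem_range ha) (isCompact_setOf_gap_eq_min_le β T)
  obtain ⟨p, hpC, hpβ, hpT⟩ := Filter.nonempty_of_mem (inter_mem hC (inter_mem hβ hfar))
  have hpβ : gap p = β := hpβ
  have hTp : (T : ℝ) ≤ p.1.1 := (not_le.1 fun h => hpT ⟨hpβ, h⟩).le.trans (min_le_left _ _)
  exact ⟨_, (Real.le_toNNReal_iff_coe_le p.2.1).2 hTp, hpβ ▸ hS.map_diag_mem_image_mul hpC⟩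

lemma exists_gap_mem_of_ray_escapes [SeparatelyContinuousMul S] [T2Space S]
    (hS : IsAdjoinedCompactIdeal I f) {𝒰 : Ultrafilter Bsg} {C : Set S} (hC : IsCompact C)
    (hIC : I ⊆ interior C) (h𝒰 : f ⁻¹' interior C ∈ 𝒰)
    (hesc : ∀ p, ∃ y, f (p * diag y) ∉ C) : ∃ β, {p | gap p = β} ∈ 𝒰 := by
  -- Each ray `y ↦ p * diag y` stays on the line of `p` and leaves `C`; the exit points
  -- accumulate at some `f w` outside `I`, and the line of `w` is open.
  have hcross : ∀ p, ∃ y, f p ∈ interior C → f (p * diag y) ∈ frontier C := by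
    intro p
    by_cases hp : f p ∈ interior C
    · obtain ⟨y₁, hy₁⟩ := hesc p
      have hray : Continuous fun y => f (p * diag y) := by
        simp only [hS.map_mul]
        exact (continuous_const_mul _).comp (hS.isEmbedding.continuous.comp continuous_diag)
      obtain ⟨_, ⟨y, -, rfl⟩, hy⟩ :=
        (isPreconnected_Icc.image _ hray.continuousOn).inter_frontier_nonempty
          ⟨_, mem_image_of_mem _ ⟨le_rfl, zero_le⟩, by
            rw [mul_diag_zero]; exact interior_subset hp⟩
          ⟨_, mem_image_of_mem _ ⟨zero_le, le_rfl⟩, hy₁⟩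
      exact ⟨y, fun _ => hy⟩
    · exact ⟨0, fun h => absurd h hp⟩
  choose R hR using hcross
  obtain ⟨z, hz, hzlim⟩ :=
    hC.frontier.ultrafilter_le_nhds (𝒰.map fun p => f (p * diag (R p)))
      (le_principal_iff.2 (Ultrafilter.mem_map.2 (mem_of_superset h𝒰 fun p hp => hR p hp)))
  obtain ⟨w, rfl⟩ : z ∈ range f := hS.range_eq ▸ fun hzI => hz.2 (hIC hzI)
  have hRw : Tendsto (fun p => p * diag (R p)) 𝒰 (𝓝 w) :=
    hS.isEmbedding.tendsto_nhds_iff.2 hzlim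
  refine ⟨gap w, ?_⟩
  filter_upwards [hRw ((isClopen_setOf_gap_eq (gap w)).isOpen.mem_nhds rfl)] with p hp
  simpa only [mem_preimage, mem_ofPred, gap_mul_diag] using hp

lemma exists_isCompact_frequently_diag_mem [SeparatelyContinuousMul S] [T2Space S]
    [LocallyCompactSpace S] (hS : IsAdjoinedCompactIdeal I f) (hI : ¬IsOpen I) :
    ∃ K, IsCompact K ∧ ∃ᶠ t in atTop, f (diag t) ∈ K := by
  obtain ⟨a, haI, 𝒰, h𝒰⟩ := exists_ultrafilter_tendsto_of_not_isOpen hS.range_eq hI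
  obtain ⟨C, hC, hIC⟩ := exists_compact_superset hS.isCompact
  have hint : f ⁻¹' interior C ∈ 𝒰 := h𝒰 (isOpen_interior.mem_nhds (hIC haI))
  by_cases hesc : ∀ p, ∃ y, f (p * diag y) ∉ C
  · obtain ⟨β, hβ⟩ := hS.exists_gap_mem_of_ray_escapes hC hIC hint hesc
    exact ⟨_, hC.image (continuous_mul_const _), hS.frequently_diag_mem_of_gap_mem haI h𝒰
      (mem_of_superset hint (preimage_mono interior_subset)) hβ⟩
  · push Not at hesc
    obtain ⟨p, hp⟩ := hesc
    exact ⟨_, hC.image (continuous_mul_const _), hS.frequently_diag_mem_of_ray_subset hp⟩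

lemma isCompact_image_Lplus_zero_union [SeparatelyContinuousMul S] [T2Space S]
    [LocallyCompactSpace S] (hS : IsAdjoinedCompactIdeal I f) (hI : ¬IsOpen I) :
    IsCompact (f '' Lplus 0 ∪ I) := by
  have hγ : Continuous (f ∘ diag) := hS.isEmbedding.continuous.comp continuous_diag
  obtain ⟨K, hK, hfreq⟩ := hS.exists_isCompact_frequently_diag_mem hI
  obtain ⟨C, hC, hev⟩ := exists_isCompact_eventually_mem_of_frequently hγ hS.isCompact hK
    (fun _ => hS.mem_of_mapClusterPt_diag) hfreq
  obtain ⟨T, hT⟩ := eventually_atTop.1 hev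
  have hclosed := hS.isClosed_image_union (Lplus_eq 0 ▸ (isClopen_setOf_gap_eq 0).isClosed)
  rw [Lplus_zero_eq_range_diag, ← range_comp] at hclosed ⊢
  have hcover : IsCompact ((f ∘ diag) '' Icc 0 T ∪ C ∪ I) :=
    ((isCompact_Icc.image hγ).union hC).union hS.isCompact
  refine hcover.of_isClosed_subset hclosed ?_
  rintro _ (⟨t, rfl⟩ | hx)
  · rcases le_total t T with h | h
    · exact Or.inl (Or.inl ⟨t, ⟨zero_le, h⟩, rfl⟩)
    · exact Or.inl (Or.inr (hT t h))
  · exact Or.inr hx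

lemma isCompact_image_Lplus_union [SeparatelyContinuousMul S] [T2Space S]
    [LocallyCompactSpace S] (hS : IsAdjoinedCompactIdeal I f) (hI : ¬IsOpen I) {α : ℝ}
    (hα : 0 ≤ α) : IsCompact (f '' Lplus α ∪ I) := by
  have h := (hS.isCompact_image_Lplus_zero_union hI).image_union_of_mapsTo hS.isCompact
    (continuous_mul_const (f ⟨(0, α), le_rfl, hα⟩)) fun x hx => (hS.mul_mem _ x hx).2
  rwa [hS.image_mul_const_image, image_mul_const_Lplus_zero hα] at h

lemma isCompact_image_Lminus_union [SeparatelyContinuousMul S] [T2Space S]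
    [LocallyCompactSpace S] (hS : IsAdjoinedCompactIdeal I f) (hI : ¬IsOpen I) {α : ℝ}
    (hα : 0 ≤ α) : IsCompact (f '' Lminus α ∪ I) := by
  have h := (hS.isCompact_image_Lplus_zero_union hI).image_union_of_mapsTo hS.isCompact
    (continuous_const_mul (f ⟨(α, 0), hα, le_rfl⟩)) fun x hx => (hS.mul_mem _ x hx).1
  rwa [hS.image_const_mul_image, image_const_mul_Lplus_zero hα] at h

end IsAdjoinedCompactIdeal

open Bsg in
theorem stmt8_general {S : Type*} [TopologicalSpace S] [T2Space S] [LocallyCompactSpace S] [Semigroup S]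
    (hsep : ∀ a : S, Continuous (fun x : S => a * x) ∧ Continuous (fun x : S => x * a))
    (I : Set S) (hIcomp : IsCompact I)
    (hIdeal : ∀ s : S, ∀ a ∈ I, s * a ∈ I ∧ a * s ∈ I)
    (f : Bsg → S)
    (hhom : ∀ u v : Bsg, f (u * v) = f u * f v)
    (hrange : Set.range f = Iᶜ)
    (hemb : Topology.IsEmbedding f)
    (hInotopen : ¬ IsOpen I) :
    ∀ α : ℝ, 0 ≤ α → IsCompact (f '' Lplus α ∪ I) ∧ IsCompact (f '' Lminus α ∪ I) := by
  intro α hα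
  have : SeparatelyContinuousMul S := ⟨(hsep _).1, (hsep _).2⟩
  have hS : IsAdjoinedCompactIdeal I f := ⟨hIcomp, hIdeal, hhom, hrange, hemb⟩
  exact ⟨hS.isCompact_image_Lplus_union hInotopen hα,
    hS.isCompact_image_Lminus_union hInotopen hα⟩

open Bsg in
/-- if `I` is not open, then for every `α ≥ 0` the sets `f(L_α^+) ∪ I` and
`f(L_α^−) ∪ I` are compact. -/
theorem stmt8 {S : Type*} [TopologicalSpace S] [T2Space S] [LocallyCompactSpace S] [Semigroup S]
    (hsep : ∀ a : S, Continuous (fun x : S => a * x) ∧ Continuous (fun x : S => x * a))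
    (I : Set S) (hne : I.Nonempty) (hIcomp : IsCompact I)
    (hIdeal : ∀ s : S, ∀ a ∈ I, s * a ∈ I ∧ a * s ∈ I)
    (f : Bsg → S) (hinj : Function.Injective f)
    (hhom : ∀ u v : Bsg, f (u * v) = f u * f v)
    (hrange : Set.range f = Iᶜ)
    (hemb : Topology.IsEmbedding f)
    (hInotopen : ¬ IsOpen I) :
    ∀ α : ℝ, 0 ≤ α → IsCompact (f '' Lplus α ∪ I) ∧ IsCompact (f '' Lminus α ∪ I) :=
  stmt8_general hsep I hIcomp hIdeal f hhom hrange hemb hInotopen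
end

section
/- Let α and β be non-negative real numbers and let the product of two subsets A, B of B_{[0,∞)} be the set {u·v : u ∈ A, v ∈ B}. Then: (i) L_α^+ · L_β^+ = L_{α+β}^+; (ii) L_α^− · L_β^− = L_{α+β}^−; (iii) L_α^+ · L_β^− = L_{α−β}^+ if α ≥ β and L_α^+ · L_β^− = L_{β−α}^− if α ≤ β; (iv) L_β^− · L_α^+ = ↓(β,α), and this set is contained in L_{α−β}^+ if α ≥ β and in L_{β−α}^− if α ≤ β. -/
namespace Bsg

@[simp] lemma mul_fst_s11 (u v : Bsg) : (u * v).1.1 = u.1.1 + v.1.1 - min u.1.2 v.1.1 := rfl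

@[simp] lemma mul_snd_s11 (u v : Bsg) : (u * v).1.2 = u.1.2 + v.1.2 - min u.1.2 v.1.1 := rfl

lemma ext_iff' {u v : Bsg} : u = v ↔ u.1.1 = v.1.1 ∧ u.1.2 = v.1.2 := by
  rw [Subtype.ext_iff, Prod.ext_iff]

lemma mk_mul_mk_self {x m y : ℝ} (hx : 0 ≤ x) (hm : 0 ≤ m) (hy : 0 ≤ y) :
    (⟨(x, m), hx, hm⟩ * ⟨(m, y), hm, hy⟩ : Bsg) = ⟨(x, y), hx, hy⟩ := by
  rw [ext_iff']
  simp only [mul_fst_s11, mul_snd_s11, min_self]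
  constructor <;> ring

@[simp] lemma mem_Lplus {γ : ℝ} {p : Bsg} : p ∈ Lplus γ ↔ p.1.2 = p.1.1 + γ := Iff.rfl

lemma Lminus_eq_Lplus_neg (γ : ℝ) : Lminus γ = Lplus (-γ) := by
  ext p
  show p.1.1 = p.1.2 + γ ↔ p.1.2 = p.1.1 + -γ
  constructor <;> intro h <;> linarith

lemma mem_image2_mul_Lplus_iff {a b : ℝ} {s : Bsg} :
    s ∈ Set.image2 (· * ·) (Lplus a) (Lplus b) ↔ s ∈ Lplus (a + b) ∧ 0 ≤ s.1.1 + a := by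
  constructor
  · rintro ⟨u, hu, v, hv, rfl⟩
    rw [mem_Lplus] at hu hv
    simp only [mem_Lplus, mul_fst_s11, mul_snd_s11]
    exact ⟨by linarith, by linarith [min_le_right u.1.2 v.1.1, u.2.2]⟩
  · rintro ⟨hs, hm⟩
    rw [mem_Lplus] at hs
    refine ⟨⟨(s.1.1, s.1.1 + a), s.2.1, hm⟩, rfl, ⟨(s.1.1 + a, s.1.2), hm, s.2.2⟩, ?_,
      mk_mul_mk_self s.2.1 hm s.2.2⟩
    show s.1.2 = s.1.1 + a + b
    linarith

lemma image2_mul_Lplus {a b : ℝ} (h : 0 ≤ a ∨ b ≤ 0) :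
    Set.image2 (· * ·) (Lplus a) (Lplus b) = Lplus (a + b) := by
  ext s
  rw [mem_image2_mul_Lplus_iff, and_iff_left_iff_imp, mem_Lplus]
  intro hs
  rcases h with ha | hb
  · linarith [s.2.1]
  · linarith [s.2.2]

lemma mul_self_eq_self_iff {e : Bsg} : e * e = e ↔ e.1.1 = e.1.2 := by
  rw [ext_iff']
  simp only [mul_fst_s11, mul_snd_s11]
  constructor
  · rintro ⟨h₁, h₂⟩
    linarith
  · intro h
    rw [h, min_self]
    constructor <;> ring

lemma mem_lowerSet_iff {s t : Bsg} :
    s ∈ lowerSet t ↔ s ∈ Lplus (t.1.2 - t.1.1) ∧ t.1.1 ≤ s.1.1 := by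
  constructor
  · rintro ⟨e, he, rfl⟩
    rw [mul_self_eq_self_iff] at he
    simp only [mem_Lplus, mul_fst_s11, mul_snd_s11, he]
    exact ⟨by ring, by linarith [min_le_right t.1.2 e.1.2]⟩
  · rintro ⟨hs, hts⟩
    rw [mem_Lplus] at hs
    have hc : t.1.2 ≤ s.1.2 := by linarith
    refine ⟨⟨(s.1.2, s.1.2), s.2.2, s.2.2⟩, mul_self_eq_self_iff.2 rfl, ?_⟩
    rw [ext_iff']
    simp only [mul_fst_s11, mul_snd_s11, min_eq_left hc]
    constructor <;> linarith

lemma lowerSet_subset_Lplus (t : Bsg) : lowerSet t ⊆ Lplus (t.1.2 - t.1.1) :=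
  fun _ hs ↦ (mem_lowerSet_iff.1 hs).1

lemma image2_mul_Lminus_Lplus {a b : ℝ} (ha : 0 ≤ a) (hb : 0 ≤ b) :
    Set.image2 (· * ·) (Lminus b) (Lplus a) = lowerSet ⟨(b, a), hb, ha⟩ := by
  ext s
  rw [Lminus_eq_Lplus_neg, mem_image2_mul_Lplus_iff, mem_lowerSet_iff, mem_Lplus, mem_Lplus]
  constructor <;> rintro ⟨hs, h⟩ <;> exact ⟨by linarith, by linarith⟩

end Bsg

open Bsg in
/-- products of the rays `L_α^+`, `L_β^−` in `B_{[0,∞)}`. -/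
theorem stmt11 (α β : ℝ) (hα : 0 ≤ α) (hβ : 0 ≤ β) :
    Set.image2 (· * ·) (Lplus α) (Lplus β) = Lplus (α + β) ∧
    Set.image2 (· * ·) (Lminus α) (Lminus β) = Lminus (α + β) ∧
    (β ≤ α → Set.image2 (· * ·) (Lplus α) (Lminus β) = Lplus (α - β)) ∧
    (α ≤ β → Set.image2 (· * ·) (Lplus α) (Lminus β) = Lminus (β - α)) ∧
    Set.image2 (· * ·) (Lminus β) (Lplus α) = lowerSet ⟨(β, α), hβ, hα⟩ ∧
    (β ≤ α → Set.image2 (· * ·) (Lminus β) (Lplus α) ⊆ Lplus (α - β)) ∧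
    (α ≤ β → Set.image2 (· * ·) (Lminus β) (Lplus α) ⊆ Lminus (β - α)) := by
  have hL : Lminus (β - α) = Lplus (α - β) := by rw [Lminus_eq_Lplus_neg, neg_sub]
  have hpm : Set.image2 (· * ·) (Lplus α) (Lminus β) = Lplus (α - β) := by
    rw [Lminus_eq_Lplus_neg, image2_mul_Lplus (.inl hα), sub_eq_add_neg]
  have hmp := image2_mul_Lminus_Lplus hα hβ
  have hsub : lowerSet ⟨(β, α), hβ, hα⟩ ⊆ Lplus (α - β) := lowerSet_subset_Lplus _
  refine ⟨image2_mul_Lplus (.inl hα), ?_, fun _ ↦ hpm, fun _ ↦ hL ▸ hpm, hmp,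
    fun _ ↦ hmp ▸ hsub, fun _ ↦ hL ▸ hmp ▸ hsub⟩
  simp only [Lminus_eq_Lplus_neg, neg_add]
  exact image2_mul_Lplus (.inr (neg_nonpos.2 hβ))
end

section
/- The one-point compactification OnePoint(B^2_{[0,∞)}), with the multiplication extending that of B_{[0,∞)} and with ∞ as a zero element, is a compact Hausdorff space in which the multiplication is separately continuous (for every element u the maps v ↦ u·v and v ↦ v·u are continuous) and the inversion map sending (a,b) ↦ (b,a) and ∞ ↦ ∞ is continuous. -/
open Bsg in
/-- The multiplication of `B_{[0,∞)}` extended to the one-point compactification,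
with `∞` as a zero element. -/
def omul (u v : OnePoint Bsg) : OnePoint Bsg :=
  Option.elim u OnePoint.infty
    (fun a => Option.elim v OnePoint.infty (fun b => (Option.some (a * b) : OnePoint Bsg)))

open Bsg in
/-- The inversion `(a,b) ↦ (b,a)`, `∞ ↦ ∞` on the one-point compactification. -/
def oinv (u : OnePoint Bsg) : OnePoint Bsg :=
  Option.elim u OnePoint.infty (fun a => (Option.some (binv a) : OnePoint Bsg))

/-!
The map `(a,b) ↦ (b − a, min a b)` identifies `B^2_{[0,∞)}` with the closed subset
`ℝ_d × [0,∞)` of `ℝ_d × ℝ`, so it is locally compact Hausdorff and its compact sets are the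
closed sets meeting finitely many rays, each in a bounded piece. Since `b − a` is additive under
the multiplication, a translation shifts the ray index by a constant, while it lowers the
`min` coordinate by a bounded amount; the inversion negates the index and keeps `min`. Hence
translations and inversion are proper maps, and proper maps extend continuously to the
one-point compactifications.
-/

open Filter Set Topology Function

namespace Bsg

noncomputable def diff (p : Bsg) : ℝ := p.1.2 - p.1.1

noncomputable def minCoord (p : Bsg) : ℝ := min p.1.1 p.1.2

/-- `WithDiscreteTopology ℝ` plays the role of `ℝ_d`: `τ_L` is induced by `coords`
(`isInducing_coords`). -/
noncomputable def coords (p : Bsg) : WithDiscreteTopology ℝ × ℝ :=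
  (WithTopology.toTopology ⊥ (diff p), minCoord p)

lemma isInducing_coords : IsInducing coords := by
  constructor
  show tauL = _
  unfold tauL instTopologicalSpaceProd
  simp only [induced_inf, induced_compose]
  rw [WithTopology.topology_eq_induced, induced_compose]
  rfl

lemma minCoord_nonneg (p : Bsg) : 0 ≤ minCoord p := le_min p.2.1 p.2.2

lemma val_fst_eq (p : Bsg) : p.1.1 = minCoord p - min (diff p) 0 := by
  unfold minCoord diff
  rcases le_total p.1.1 p.1.2 with h | h
  · rw [min_eq_left h, min_eq_right (by linarith)]; ring
  · rw [min_eq_right h, min_eq_left (by linarith)]; ring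

lemma val_snd_eq (p : Bsg) : p.1.2 = minCoord p + max (diff p) 0 := by
  unfold minCoord diff
  rcases le_total p.1.1 p.1.2 with h | h
  · rw [min_eq_left h, max_eq_left (by linarith)]; ring
  · rw [min_eq_right h, max_eq_right (by linarith)]; ring

lemma coords_injective : Injective coords := by
  intro p q h
  obtain ⟨hd, hm⟩ := Prod.ext_iff.mp h
  replace hd : diff p = diff q := WithTopology.toTopology_injective _ hd
  replace hm : minCoord p = minCoord q := hm
  exact Subtype.ext (Prod.ext (by rw [val_fst_eq p, val_fst_eq q, hd, hm])
    (by rw [val_snd_eq p, val_snd_eq q, hd, hm]))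

lemma range_coords : range coords = {x | 0 ≤ x.2} := by
  refine Subset.antisymm (range_subset_iff.mpr fun p => minCoord_nonneg p) fun x hx => ?_
  obtain ⟨⟨t⟩, m⟩ := x
  have hm : 0 ≤ m := hx
  let p : Bsg := ⟨(m - min t 0, m + max t 0),
    by linarith [min_le_right t 0], by linarith [le_max_right t 0]⟩
  refine ⟨p, Prod.ext ?_ ?_⟩
  · show WithTopology.toTopology ⊥ (m + max t 0 - (m - min t 0)) = WithTopology.toTopology ⊥ t
    rw [add_sub_sub_cancel, max_add_min, add_zero]
  · show min (m - min t 0) (m + max t 0) = m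
    rcases le_total t 0 with h | h
    · rw [min_eq_left h, max_eq_right h, add_zero]; exact min_eq_right (by linarith)
    · rw [min_eq_right h, max_eq_left h, sub_zero]; exact min_eq_left (by linarith)

lemma isClosedEmbedding_coords : IsClosedEmbedding coords :=
  ⟨⟨isInducing_coords, coords_injective⟩, by
    rw [range_coords]; exact isClosed_le continuous_const continuous_snd⟩

instance : T2Space Bsg := isClosedEmbedding_coords.isEmbedding.t2Space

instance : LocallyCompactSpace Bsg := isClosedEmbedding_coords.locallyCompactSpace

lemma continuous_comp_diff {Y : Type*} [TopologicalSpace Y] (g : ℝ → Y) :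
    Continuous fun p => g (diff p) :=
  (continuous_of_discreteTopology (f := fun t : WithDiscreteTopology ℝ => g t.ofTopology)).comp
    (continuous_fst.comp isInducing_coords.continuous)

lemma continuous_minCoord : Continuous minCoord :=
  continuous_snd.comp isInducing_coords.continuous

lemma continuous_val_fst : Continuous fun p : Bsg => p.1.1 := by
  simp only [val_fst_eq]
  exact continuous_minCoord.sub (continuous_comp_diff fun t => min t 0)

lemma continuous_val_snd : Continuous fun p : Bsg => p.1.2 := by
  simp only [val_snd_eq]
  exact continuous_minCoord.add (continuous_comp_diff fun t => max t 0)

lemma isCompact_iff {K : Set Bsg} :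
    IsCompact K ↔ IsClosed K ∧ (diff '' K).Finite ∧ BddAbove (minCoord '' K) := by
  refine ⟨fun hK => ⟨hK.isClosed, ?_, (hK.image continuous_minCoord).bddAbove⟩, ?_⟩
  · refine Finite.of_finite_image ?_ (WithTopology.toTopology_injective ⊥).injOn
    rw [image_image]
    exact (hK.image (continuous_comp_diff _)).finite_of_discrete
  · rintro ⟨hclosed, hfin, M, hM⟩
    refine (isClosedEmbedding_coords.isCompact_preimage
      ((hfin.image (WithTopology.toTopology ⊥)).isCompact.prod (isCompact_Icc (a := 0) (b := M))))
      |>.of_isClosed_subset hclosed fun p hp => ?_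
    exact ⟨mem_image_of_mem _ (mem_image_of_mem _ hp),
      minCoord_nonneg p, hM (mem_image_of_mem _ hp)⟩

lemma isProperMap_of_diff_eq {f : Bsg → Bsg} {h : ℝ → ℝ} {C : ℝ} (hh : Injective h)
    (hdiff : ∀ v, diff (f v) = h (diff v)) (hmin : Continuous fun v => minCoord (f v))
    (hbound : ∀ v, minCoord v ≤ minCoord (f v) + C) : IsProperMap f := by
  have hf : Continuous f := by
    rw [isInducing_coords.continuous_iff]
    simp only [comp_def, coords, hdiff]
    exact (continuous_comp_diff fun t => WithTopology.toTopology ⊥ (h t)).prodMk hmin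
  refine isProperMap_iff_isCompact_preimage.mpr ⟨hf, fun K hK => ?_⟩
  obtain ⟨hclosed, hfin, M, hM⟩ := isCompact_iff.mp hK
  refine isCompact_iff.mpr ⟨hclosed.preimage hf, (hfin.preimage hh.injOn).subset ?_, M + C, ?_⟩
  · rintro _ ⟨v, hv, rfl⟩
    show h (diff v) ∈ diff '' K
    exact hdiff v ▸ mem_image_of_mem diff hv
  · rintro _ ⟨v, hv, rfl⟩
    linarith [hbound v, hM (mem_image_of_mem minCoord hv)]

lemma mul_val (u v : Bsg) :
    (u * v).1 = (u.1.1 + v.1.1 - min u.1.2 v.1.1, u.1.2 + v.1.2 - min u.1.2 v.1.1) := rfl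

lemma diff_mul (u v : Bsg) : diff (u * v) = diff u + diff v := by
  simp only [diff, mul_val]; ring

lemma continuous_minCoord_mul_left (u : Bsg) : Continuous fun v => minCoord (u * v) := by
  have := continuous_val_fst; have := continuous_val_snd
  simp only [minCoord, mul_val]
  fun_prop

lemma continuous_minCoord_mul_right (u : Bsg) : Continuous fun v => minCoord (v * u) := by
  have := continuous_val_fst; have := continuous_val_snd
  simp only [minCoord, mul_val]
  fun_prop

lemma minCoord_le_minCoord_mul_left (u v : Bsg) : minCoord v ≤ minCoord (u * v) + u.1.2 := by
  simp only [minCoord, mul_val]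
  rw [← sub_le_iff_le_add]
  apply le_min <;>
    linarith [min_le_left v.1.1 v.1.2, min_le_right v.1.1 v.1.2, min_le_left u.1.2 v.1.1,
      min_le_right u.1.2 v.1.1, u.2.1, u.2.2]

lemma minCoord_le_minCoord_mul_right (u v : Bsg) : minCoord v ≤ minCoord (v * u) + u.1.1 := by
  simp only [minCoord, mul_val]
  rw [← sub_le_iff_le_add]
  apply le_min <;>
    linarith [min_le_left v.1.1 v.1.2, min_le_right v.1.1 v.1.2, min_le_left v.1.2 u.1.1,
      min_le_right v.1.2 u.1.1, u.2.1, u.2.2]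

lemma isProperMap_mul_left (u : Bsg) : IsProperMap (u * ·) :=
  isProperMap_of_diff_eq (add_right_injective (diff u)) (diff_mul u)
    (continuous_minCoord_mul_left u) (minCoord_le_minCoord_mul_left u)

lemma isProperMap_mul_right (u : Bsg) : IsProperMap (· * u) :=
  isProperMap_of_diff_eq (add_left_injective (diff u)) (fun v => diff_mul v u)
    (continuous_minCoord_mul_right u) (minCoord_le_minCoord_mul_right u)

lemma minCoord_binv (v : Bsg) : minCoord (binv v) = minCoord v := min_comm _ _

lemma isProperMap_binv : IsProperMap binv :=
  isProperMap_of_diff_eq (C := 0) neg_injective (fun v => (neg_sub v.1.2 v.1.1).symm)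
    (continuous_minCoord.congr fun v => (minCoord_binv v).symm)
    (fun v => by rw [minCoord_binv, add_zero])

end Bsg

lemma OnePoint.continuous_map_of_isProperMap {X Y : Type*} [TopologicalSpace X]
    [TopologicalSpace Y] [R1Space X] [T2Space Y] [CompactlyCoherentSpace Y] {f : X → Y}
    (hf : IsProperMap f) : Continuous (OnePoint.map f) := by
  refine OnePoint.continuous_map hf.continuous ?_
  rw [coclosedCompact_eq_cocompact, coclosedCompact_eq_cocompact]
  exact (isProperMap_iff_tendsto_cocompact.mp hf).2

lemma omul_coe_left_eq_map (a : Bsg) :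
    (fun v => omul (a : OnePoint Bsg) v) = OnePoint.map (a * ·) := by
  funext v; cases v <;> rfl

lemma omul_coe_right_eq_map (a : Bsg) :
    (fun v => omul v (a : OnePoint Bsg)) = OnePoint.map (· * a) := by
  funext v; cases v <;> rfl

lemma omul_infty_right (u : OnePoint Bsg) : omul u OnePoint.infty = OnePoint.infty := by
  cases u <;> rfl

lemma oinv_eq_map : oinv = OnePoint.map Bsg.binv := by
  funext v; cases v <;> rfl

/-- the one-point compactification of `B^2_{[0,∞)}`, with the extended
multiplication (with `∞` as zero), is compact Hausdorff, has separately continuous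
multiplication, and continuous inversion. -/
theorem stmt14 :
    (∀ u v : Bsg, omul (Option.some u : OnePoint Bsg) (Option.some v : OnePoint Bsg)
        = (Option.some (u * v) : OnePoint Bsg)) ∧
    (∀ u : OnePoint Bsg,
        omul u OnePoint.infty = OnePoint.infty ∧ omul OnePoint.infty u = OnePoint.infty) ∧
    CompactSpace (OnePoint Bsg) ∧ T2Space (OnePoint Bsg) ∧
    (∀ u : OnePoint Bsg,
        Continuous (fun v => omul u v) ∧ Continuous (fun v => omul v u)) ∧
    Continuous oinv := by
  refine ⟨fun u v => rfl, fun u => ⟨omul_infty_right u, rfl⟩, inferInstance, inferInstance,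
    fun u => ?_, oinv_eq_map ▸ OnePoint.continuous_map_of_isProperMap Bsg.isProperMap_binv⟩
  cases u with
  | infty => exact ⟨continuous_const, continuous_const.congr fun v => (omul_infty_right v).symm⟩
  | coe a =>
    exact ⟨omul_coe_left_eq_map a ▸
        OnePoint.continuous_map_of_isProperMap (Bsg.isProperMap_mul_left a),
      omul_coe_right_eq_map a ▸
        OnePoint.continuous_map_of_isProperMap (Bsg.isProperMap_mul_right a)⟩
end

section
/- Let S be the semigroup B^2_{[0,∞)} with an adjoined compact ideal I, and assume in addition that the multiplication of S is jointly continuous (S is a topological semigroup). Then I is an open subset of S. -/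
/-!
Suppose `I` is not open. By joint continuity and Wallace's lemma there is an open `V ⊇ I` with
`f (0,0) ∉ V · V`; let `K ⊆ V` be a compact neighbourhood of `I`. As `K \ int K` is a compact subset
of `S \ I`, its preimage meets only finitely many rays of `B²_{[0,∞)}`, and by connectedness any
other ray meeting `f⁻¹(int K)` lies in `f⁻¹ K`. If every ray met `f⁻¹ K` in a bounded set,
`f⁻¹(int K)` would lie in a compact `C` and `I = int K \ f(C)` would be open; so some ray meets
`f⁻¹ K` unboundedly, and its left translates then meet `f⁻¹(int K)` on every ray. Hence all but
finitely many rays lie in `f⁻¹ K ⊆ f⁻¹ V`, and for a suitable `p > 0` we get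
`f (0,p) · f (p,0) = f (0,0) ∈ V · V`.
-/

open Set Topology
open scoped Pointwise

namespace Bsg

/-- The signed index of the ray through `p`: `p ∈ L_α^+` iff `ray p = α`, `p ∈ L_α^−` iff
`ray p = -α`. -/
def ray (p : Bsg) : ℝ := p.1.2 - p.1.1

def height (p : Bsg) : ℝ := min p.1.1 p.1.2

/-- The point of height `max x 0` on the ray `r`: clamping makes `ofRay r` continuous on all
of `ℝ`, which is connected. -/
def ofRay (r x : ℝ) : Bsg :=
  ⟨(max x 0 + max (-r) 0, max x 0 + max r 0),
    add_nonneg (le_max_right _ _) (le_max_right _ _),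
    add_nonneg (le_max_right _ _) (le_max_right _ _)⟩

lemma height_nonneg (p : Bsg) : 0 ≤ height p := le_min p.2.1 p.2.2

lemma ray_ofRay (r x : ℝ) : ray (ofRay r x) = r := by
  have hr : max r 0 - max (-r) 0 = r := posPart_sub_negPart r
  simp only [ray, ofRay]
  linarith

lemma height_ofRay (r x : ℝ) : height (ofRay r x) = max x 0 := by
  simp only [height, ofRay, min_def, max_def]
  split_ifs <;> linarith

lemma ofRay_ray_height (p : Bsg) : ofRay (ray p) (height p) = p := by
  have h1 := p.2.1; have h2 := p.2.2
  apply Subtype.ext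
  apply Prod.ext <;> simp only [ofRay, ray, height, min_def, max_def] <;> split_ifs <;> linarith

lemma ofRay_mul_ofRay_neg {p : ℝ} (hp : 0 ≤ p) : ofRay p 0 * ofRay (-p) 0 = ofRay 0 0 := by
  apply Subtype.ext
  apply Prod.ext <;> simp [HMul.hMul, Mul.mul, bmul, ofRay, hp]

lemma ray_ofRay_mul {t x : ℝ} (htx : t ≤ x) (hx : 0 ≤ x) (r : ℝ) :
    ray (ofRay t 0 * ofRay r x) = r + t := by
  have hmin : min (ofRay t 0).1.2 (ofRay r x).1.1 = max t 0 := by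
    simp only [ofRay, max_self, zero_add, max_eq_left hx]
    exact min_eq_left (by linarith [le_max_right (-r) 0, max_le htx hx])
  have hr : max r 0 - max (-r) 0 = r := posPart_sub_negPart r
  have ht : max t 0 - max (-t) 0 = t := posPart_sub_negPart t
  simp only [ray, HMul.hMul, Mul.mul, bmul, hmin]
  simp only [ofRay]
  linarith

lemma continuous_ray_height :
    @Continuous Bsg (ℝ × ℝ) _ (@instTopologicalSpaceProd ℝ ℝ ⊥ _) fun p => (ray p, height p) :=
  continuous_induced_dom

lemma isOpen_setOf_ray_eq (r : ℝ) : IsOpen {p : Bsg | ray p = r} := by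
  have : @IsOpen (ℝ × ℝ) (@instTopologicalSpaceProd ℝ ℝ ⊥ _) ({r} ×ˢ Set.univ) :=
    @IsOpen.prod ℝ ℝ ⊥ _ _ _ (@isOpen_discrete ℝ ⊥ (discreteTopology_bot ℝ) _) isOpen_univ
  convert @IsOpen.preimage Bsg (ℝ × ℝ) _ (@instTopologicalSpaceProd ℝ ℝ ⊥ _) _
    continuous_ray_height _ this using 1
  ext p
  simp

lemma continuous_height : Continuous height :=
  @Continuous.comp Bsg (ℝ × ℝ) ℝ _ (@instTopologicalSpaceProd ℝ ℝ ⊥ _) _ _ _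
    (@continuous_snd ℝ ℝ ⊥ _) continuous_ray_height

lemma continuous_ofRay (r : ℝ) : Continuous (ofRay r) := by
  refine continuous_induced_rng.2 ?_
  have : (fun p : Bsg => (ray p, height p)) ∘ ofRay r = fun x => (r, max x 0) := by
    funext x
    simp only [Function.comp, ray_ofRay, height_ofRay]
  exact this ▸ @Continuous.prodMk ℝ ℝ ℝ ⊥ _ _ _ _ (@continuous_const ℝ ℝ _ ⊥ r)
    (continuous_id.max continuous_const)

lemma _root_.IsCompact.finite_image_ray {K : Set Bsg} (hK : IsCompact K) : (ray '' K).Finite := by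
  obtain ⟨T, hT⟩ := hK.elim_finite_subcover (fun r => {p : Bsg | ray p = r}) isOpen_setOf_ray_eq
    fun p _ => Set.mem_iUnion.2 ⟨ray p, rfl⟩
  refine T.finite_toSet.subset ?_
  rintro _ ⟨p, hp, rfl⟩
  obtain ⟨r, hr, hpr⟩ := Set.mem_iUnion₂.1 (hT hp)
  exact (show ray p = r from hpr) ▸ hr

variable {D G : Set Bsg}

/-- Each ray is connected, so it cannot leave `D` without passing through `D \ G`. -/
lemma ofRay_ray_mem_of_mem (hD : IsClosed D) (hG : IsOpen G) (hGD : G ⊆ D) {q : Bsg}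
    (hq : q ∈ G) (hqDG : ray q ∉ ray '' (D \ G)) (x : ℝ) : ofRay (ray q) x ∈ D := by
  have hDG : ofRay (ray q) ⁻¹' D = ofRay (ray q) ⁻¹' G :=
    Subset.antisymm (fun y hy => by_contra fun hyG => hqDG ⟨_, ⟨hy, hyG⟩, ray_ofRay _ _⟩)
      fun y hy => hGD hy
  have hclopen : IsClopen (ofRay (ray q) ⁻¹' D) :=
    ⟨hD.preimage (continuous_ofRay _), hDG ▸ hG.preimage (continuous_ofRay _)⟩
  have hheight : height q ∈ ofRay (ray q) ⁻¹' D := by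
    simpa only [mem_preimage, ofRay_ray_height] using hGD hq
  show x ∈ ofRay (ray q) ⁻¹' D
  rw [hclopen.eq_univ ⟨_, hheight⟩]
  trivial

lemma exists_isCompact_superset_of_bounded (hD : IsClosed D) (hG : IsOpen G) (hGD : G ⊆ D)
    (hDG : IsCompact (D \ G)) (hbdd : ∀ r, ∃ M, ∀ x, M ≤ x → ofRay r x ∉ D) :
    ∃ C, IsCompact C ∧ G ⊆ C := by
  choose M hM using hbdd
  refine ⟨⋃ r ∈ ray '' (D \ G), ofRay r '' Icc 0 (M r),
    hDG.finite_image_ray.isCompact_biUnion fun r _ => isCompact_Icc.image (continuous_ofRay r), ?_⟩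
  intro q hq
  have hray : ray q ∈ ray '' (D \ G) := by
    by_contra h
    exact hM _ _ le_rfl (ofRay_ray_mem_of_mem hD hG hGD hq h _)
  have hheight : height q ≤ M (ray q) := by
    by_contra h
    exact hM _ _ (not_le.1 h).le ((ofRay_ray_height q).symm ▸ hGD hq)
  exact mem_biUnion hray ⟨height q, ⟨height_nonneg q, hheight⟩, ofRay_ray_height q⟩

end Bsg

lemma exists_isOpen_superset_forall_mul_ne {M : Type*} [TopologicalSpace M] [T1Space M] [Mul M]
    (hmul : Continuous fun p : M × M => p.1 * p.2) {K : Set M} (hK : IsCompact K) {z : M}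
    (hz : ∀ a ∈ K, ∀ b ∈ K, a * b ≠ z) :
    ∃ V, IsOpen V ∧ K ⊆ V ∧ ∀ a ∈ V, ∀ b ∈ V, a * b ≠ z := by
  obtain ⟨U, W, hU, hW, hKU, hKW, hUW⟩ := generalized_tube_lemma hK hK
    (isClosed_singleton.isOpen_compl.preimage hmul) fun p hp => hz p.1 hp.1 p.2 hp.2
  exact ⟨U ∩ W, hU.inter hW, subset_inter hKU hKW, fun a ha b hb => hUW (mk_mem_prod ha.1 hb.2)⟩

section AdjoinedIdeal

open Bsg

variable {S : Type*} [TopologicalSpace S] {I K : Set S} {f : Bsg → S}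

lemma isCompact_preimage_diff (hf : IsInducing f) (hrange : range f = Iᶜ) (hK : IsCompact K)
    {W : Set S} (hW : IsOpen W) (hIW : I ⊆ W) : IsCompact (f ⁻¹' (K \ W)) :=
  hf.isCompact_preimage' (hK.diff hW) (hrange ▸ fun _ hz hzI => hz.2 (hIW hzI))

lemma isOpen_of_preimage_interior_subset_isCompact [T2Space S] (hf : Continuous f)
    (hrange : range f = Iᶜ) (hIK : I ⊆ interior K) {C : Set Bsg} (hC : IsCompact C)
    (hKC : f ⁻¹' interior K ⊆ C) : IsOpen I := by
  convert isOpen_interior.sdiff (hC.image hf).isClosed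
  ext z
  constructor
  · rintro hz
    refine ⟨hIK hz, ?_⟩
    rintro ⟨w, -, rfl⟩
    exact (hrange ▸ mem_range_self w : f w ∈ Iᶜ) hz
  · rintro ⟨hzK, hzC⟩
    by_contra hzI
    obtain ⟨w, rfl⟩ : z ∈ range f := hrange ▸ hzI
    exact hzC (mem_image_of_mem f (hKC hzK))

lemma exists_ray_unbounded [T2Space S] (hf : IsEmbedding f) (hrange : range f = Iᶜ)
    (hK : IsCompact K) (hIK : I ⊆ interior K) (hI : ¬IsOpen I) :
    ∃ r, ∀ M, ∃ x, M ≤ x ∧ f (ofRay r x) ∈ K := by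
  by_contra! hbdd
  obtain ⟨C, hC, hKC⟩ := exists_isCompact_superset_of_bounded
    (hK.isClosed.preimage hf.continuous) (isOpen_interior.preimage hf.continuous)
    (preimage_mono interior_subset) (isCompact_preimage_diff hf.isInducing hrange hK
      isOpen_interior hIK) hbdd
  exact hI (isOpen_of_preimage_interior_subset_isCompact hf.continuous hrange hIK hC hKC)

/-- `K` minus the open set `(f (ofRay (u - r) 0) * ·) ⁻¹' interior K ⊇ I` pulls back to a compact,
hence height-bounded, set; so far out on ray `r` the translate lands in `f ⁻¹' interior K`. -/
lemma exists_mem_interior_ray_eq [Mul S] (hf : IsInducing f) (hrange : range f = Iᶜ)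
    (hhom : ∀ u v, f (u * v) = f u * f v) (hleft : ∀ a : S, Continuous (a * ·))
    (hIdeal : ∀ s, ∀ a ∈ I, s * a ∈ I) (hK : IsCompact K) (hIK : I ⊆ interior K) {r : ℝ}
    (hr : ∀ M, ∃ x, M ≤ x ∧ f (ofRay r x) ∈ K) (u : ℝ) :
    ∃ q, f q ∈ interior K ∧ ray q = u := by
  set W := (f (ofRay (u - r) 0) * ·) ⁻¹' interior K
  have hW : IsOpen W := isOpen_interior.preimage (hleft _)
  have hIW : I ⊆ W := fun a ha => hIK (hIdeal _ a ha)
  obtain ⟨b, hb⟩ :=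
    ((isCompact_preimage_diff hf hrange hK hW hIW).image continuous_height).bddAbove
  obtain ⟨x, hx, hxK⟩ := hr (max (b + 1) (max (u - r) 0))
  have hx0 : 0 ≤ x := (le_max_right _ _).trans ((le_max_right _ _).trans hx)
  have hxW : f (ofRay r x) ∈ W := by
    by_contra h
    have := hb ⟨_, ⟨hxK, h⟩, rfl⟩
    rw [height_ofRay, max_eq_left hx0] at this
    linarith [(le_max_left _ _).trans hx]
  refine ⟨ofRay (u - r) 0 * ofRay r x, (hhom _ _).symm ▸ hxW, ?_⟩
  rw [ray_ofRay_mul ((le_max_left _ _).trans ((le_max_right _ _).trans hx)) hx0]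
  ring

lemma ofRay_mem_of_notMem_image_ray [T2Space S] [Mul S] (hf : IsEmbedding f)
    (hrange : range f = Iᶜ) (hhom : ∀ u v, f (u * v) = f u * f v)
    (hleft : ∀ a : S, Continuous (a * ·)) (hIdeal : ∀ s, ∀ a ∈ I, s * a ∈ I) (hK : IsCompact K)
    (hIK : I ⊆ interior K) (hI : ¬IsOpen I) {u : ℝ} (hu : u ∉ ray '' (f ⁻¹' (K \ interior K))) (x : ℝ) :
    f (ofRay u x) ∈ K := by
  obtain ⟨r, hr⟩ := exists_ray_unbounded hf hrange hK hIK hI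
  obtain ⟨q, hq, rfl⟩ :=
    exists_mem_interior_ray_eq hf.isInducing hrange hhom hleft hIdeal hK hIK hr u
  exact ofRay_ray_mem_of_mem (hK.isClosed.preimage hf.continuous)
    (isOpen_interior.preimage hf.continuous) (preimage_mono interior_subset) hq hu x

end AdjoinedIdeal

theorem stmt16_general {S : Type*} [TopologicalSpace S] [T2Space S] [LocallyCompactSpace S] [Semigroup S]
    (hsep : ∀ a : S, Continuous (fun x : S => a * x) ∧ Continuous (fun x : S => x * a))
    (I : Set S) (hIcomp : IsCompact I)
    (hIdeal : ∀ s : S, ∀ a ∈ I, s * a ∈ I ∧ a * s ∈ I)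
    (f : Bsg → S)
    (hhom : ∀ u v : Bsg, f (u * v) = f u * f v)
    (hrange : Set.range f = Iᶜ)
    (hemb : Topology.IsEmbedding f)
    (hjoint : Continuous (fun p : S × S => p.1 * p.2)) :
    IsOpen I := by
  by_contra hI
  have hf0 : f (Bsg.ofRay 0 0) ∉ I := (hrange ▸ mem_range_self _ : f (Bsg.ofRay 0 0) ∈ Iᶜ)
  obtain ⟨V, hV, hIV, hVV⟩ := exists_isOpen_superset_forall_mul_ne hjoint hIcomp
    (z := f (Bsg.ofRay 0 0)) fun a _ b hb hab => hf0 (hab ▸ (hIdeal a b hb).1)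
  obtain ⟨K, hK, hIK, hKV⟩ := exists_compact_between hIcomp hV hIV
  have hKrays : ∀ u ∉ Bsg.ray '' (f ⁻¹' (K \ interior K)), ∀ x, f (Bsg.ofRay u x) ∈ K :=
    fun _ => ofRay_mem_of_notMem_image_ray hemb hrange hhom (fun a => (hsep a).1)
      (fun s a ha => (hIdeal s a ha).1) hK hIK hI
  have hT := (isCompact_preimage_diff hemb.isInducing hrange hK isOpen_interior hIK)
    |>.finite_image_ray
  obtain ⟨p, hp, hpT⟩ := ((Ioi_infinite 0).sdiff (hT.union hT.neg)).nonempty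
  rw [mem_union, not_or, Set.mem_neg] at hpT
  refine hVV _ (hKV (hKrays _ hpT.1 0)) _ (hKV (hKrays _ hpT.2 0)) ?_
  rw [← hhom, Bsg.ofRay_mul_ofRay_neg (le_of_lt hp)]

/-- if in addition the multiplication of `S` is jointly continuous, then `I`
is open. -/
theorem stmt16 {S : Type*} [TopologicalSpace S] [T2Space S] [LocallyCompactSpace S] [Semigroup S]
    (hsep : ∀ a : S, Continuous (fun x : S => a * x) ∧ Continuous (fun x : S => x * a))
    (I : Set S) (hne : I.Nonempty) (hIcomp : IsCompact I)
    (hIdeal : ∀ s : S, ∀ a ∈ I, s * a ∈ I ∧ a * s ∈ I)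
    (f : Bsg → S) (hinj : Function.Injective f)
    (hhom : ∀ u v : Bsg, f (u * v) = f u * f v)
    (hrange : Set.range f = Iᶜ)
    (hemb : Topology.IsEmbedding f)
    (hjoint : Continuous (fun p : S × S => p.1 * p.2)) :
    IsOpen I :=
  stmt16_general hsep I hIcomp hIdeal f hhom hrange hemb hjoint
end
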